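/- For every m ≥ 2 and k ≥ 2: every truth assignment to the variables x_1, …, x_{m(k−1)} of Hamming weight at most 1 can be extended (by choosing values for the auxiliary variables u_1, …, u_{m−1}, v_1, …, v_{m−1}) to a truth assignment satisfying every formula of the k-DNF set W_m. -/
import Mathlib


namespace PaperKDNF

/-- A literal: a propositional variable together with a polarity
(`true` means the variable occurs unnegated). -/
abbrev Lit (V : Type) := V × Bool

/-- A term: a conjunction of literals, represented as a finite set of literals.
The empty term is the constant true. -/
abbrev Trm (V : Type) := Finset (Lit V)

/-- A DNF formula: a disjunction of terms, represented as a finite set of terms. -/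
abbrev DNF (V : Type) := Finset (Trm V)

/-- A DNF set: a finite set of DNF formulas, interpreted as their conjunction. -/
abbrev DNFSet (V : Type) := Finset (DNF V)

/-- Evaluation of a literal under a truth assignment. -/
def litEval {V : Type} (α : V → Bool) (l : Lit V) : Bool :=
  if l.2 then α l.1 else !(α l.1)

/-- A term is satisfied iff all its literals are true. -/
def trmSat {V : Type} (α : V → Bool) (t : Trm V) : Prop :=
  ∀ l ∈ t, litEval α l = true

/-- A DNF formula is satisfied iff some term in it is satisfied. -/
def dnfSat {V : Type} (α : V → Bool) (F : DNF V) : Prop :=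
  ∃ t ∈ F, trmSat α t

/-- A DNF set is satisfied iff every formula in it is satisfied. -/
def setSat {V : Type} (α : V → Bool) (D : DNFSet V) : Prop :=
  ∀ F ∈ D, dnfSat α F

/-- A DNF set is satisfiable iff some truth assignment satisfies it. -/
def Satisfiable {V : Type} (D : DNFSet V) : Prop :=
  ∃ α : V → Bool, setSat α D

/-- A `k`-DNF formula: all terms have at most `k` literals. -/
def IsKDNF {V : Type} (k : ℕ) (F : DNF V) : Prop :=
  ∀ t ∈ F, t.card ≤ k

/-- A `k`-DNF set: a finite set of `k`-DNF formulas. -/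
def IsKDNFSet {V : Type} (k : ℕ) (D : DNFSet V) : Prop :=
  ∀ F ∈ D, IsKDNF k F

/-- The variables occurring in a term. -/
def trmVars {V : Type} [DecidableEq V] (t : Trm V) : Finset V :=
  t.image Prod.fst

/-- The variables occurring in a DNF formula. -/
def dnfVars {V : Type} [DecidableEq V] (F : DNF V) : Finset V :=
  F.biUnion trmVars

/-- The variables occurring in a DNF set. -/
def setVars {V : Type} [DecidableEq V] (D : DNFSet V) : Finset V :=
  D.biUnion dnfVars

/-- The DNF set obtained from `D` by replacing the term `t` of the formula `F ∈ D`
by the term `t'`. -/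
def weaken {V : Type} [DecidableEq V] (D : DNFSet V) (F : DNF V) (t t' : Trm V) :
    DNFSet V :=
  insert (insert t' (F.erase t)) (D.erase F)

/-- A DNF set is minimally unsatisfiable iff it is unsatisfiable and replacing any
single term `t` appearing in a formula `F` of the set by any proper subterm `t'` of
`t` (obtained by deleting at least one literal; the empty term is the constant true)
yields a satisfiable set. -/
def MinUnsat {V : Type} [DecidableEq V] (D : DNFSet V) : Prop :=
  ¬ Satisfiable D ∧
    ∀ F ∈ D, ∀ t ∈ F, ∀ t' ⊂ t, Satisfiable (weaken D F t t')

/-- Indices of the `j`-th block `X_j = {x_{(j-1)(k-1)+1}, …, x_{j(k-1)}}` (1-based). -/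
def blockX (k j : ℕ) : Finset ℕ := Finset.Ioc ((j-1)*(k-1)) (j*(k-1))

/-- The term `⋀_{i ∈ B} ¬x_i`. -/
def negBlockTerm {V : Type} [DecidableEq V] (xv : ℕ → V) (B : Finset ℕ) : Trm V :=
  B.image (fun i => (xv i, false))

/-- The term `⋀_{i' ∈ B, i' ≠ i} ¬x_{i'}`. -/
def almostNegTerm {V : Type} [DecidableEq V] (xv : ℕ → V) (B : Finset ℕ) (i : ℕ) :
    Trm V :=
  (B.erase i).image (fun i' => (xv i', false))

/-- Formulas (i)–(ii) of `W_m`: `¬u_j ∨ (u_{j-1} ∧ ⋀_{x ∈ X_j} ¬x)` for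
`1 ≤ j ≤ m-1` (for `j = 1` the conjunct `u_{j-1}` is absent). -/
def Wu {V : Type} [DecidableEq V] (k : ℕ) (xv uv : ℕ → V) (j : ℕ) : DNF V :=
  { {(uv j, false)},
    (if j = 1 then (∅ : Trm V) else {(uv (j-1), true)}) ∪ negBlockTerm xv (blockX k j) }

/-- Formulas (iii)–(iv) of `W_m`:
`¬v_j ∨ u_j ∨ (v_{j-1} ∧ ⋀_{x ∈ X_j} ¬x) ∨ ⋁_{x ∈ X_j} (u_{j-1} ∧ ⋀_{x' ∈ X_j, x' ≠ x} ¬x')`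
for `1 ≤ j ≤ m-1` (for `j = 1` the term containing `v_{j-1}` and the conjuncts
`u_{j-1}` are absent). -/
def Wv {V : Type} [DecidableEq V] (k : ℕ) (xv uv vv : ℕ → V) (j : ℕ) : DNF V :=
  ({ {(vv j, false)}, {(uv j, true)} } : DNF V) ∪
  (if j = 1 then (∅ : DNF V)
    else {insert (vv (j-1), true) (negBlockTerm xv (blockX k j))}) ∪
  (blockX k j).image (fun i =>
    (if j = 1 then (∅ : Trm V) else {(uv (j-1), true)}) ∪ almostNegTerm xv (blockX k j) i)

/-- Formula (v) of `W_m`: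
`(v_{m-1} ∧ ⋀_{x ∈ X_m} ¬x) ∨ ⋁_{x ∈ X_m} (u_{m-1} ∧ ⋀_{x' ∈ X_m, x' ≠ x} ¬x')`. -/
def Wlast {V : Type} [DecidableEq V] (m k : ℕ) (xv uv vv : ℕ → V) : DNF V :=
  insert (insert (vv (m-1), true) (negBlockTerm xv (blockX k m)))
    ((blockX k m).image (fun i =>
      insert (uv (m-1), true) (almostNegTerm xv (blockX k m) i)))

/-- The `k`-DNF set `W_m`, over the `x`-variables `xv 1, …, xv (m(k-1))` and the
auxiliary variables `uv 1, …, uv (m-1)` and `vv 1, …, vv (m-1)`. -/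
def Wset {V : Type} [DecidableEq V] (m k : ℕ) (xv uv vv : ℕ → V) : DNFSet V :=
  (Finset.Icc 1 (m-1)).image (Wu k xv uv) ∪
  (Finset.Icc 1 (m-1)).image (Wv k xv uv vv) ∪
  {Wlast m k xv uv vv}

/-- The variables of `W_m`: the `x`-variables and the auxiliary `u`- and
`v`-variables. -/
inductive WVar where
  | x : ℕ → WVar
  | u : ℕ → WVar
  | v : ℕ → WVar
deriving DecidableEq

/-- The `k`-DNF set `W_m` over the variables `WVar`. -/
def WmSet (m k : ℕ) : DNFSet WVar := Wset m k WVar.x WVar.u WVar.v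

/-- The Hamming weight of the `x`-part of a truth assignment: the number of the
variables `x_1, …, x_{m(k-1)}` assigned true. -/
def xWeight (m k : ℕ) (α : WVar → Bool) : ℕ :=
  ((Finset.Icc 1 (m*(k-1))).filter (fun i => α (WVar.x i) = true)).card

/-- For every `m ≥ 2` and `k ≥ 2`: every truth assignment to the
variables `x_1, …, x_{m(k-1)}` of Hamming weight at most `1` can be extended (by
choosing values for the auxiliary variables) to a truth assignment satisfying every
formula of the `k`-DNF set `W_m`. -/
theorem Wset_weight_le_one_satisfiable (m k : ℕ) (hm : 2 ≤ m) (hk : 2 ≤ k)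
    (β : ℕ → Bool)
    (hβ : ((Finset.Icc 1 (m*(k-1))).filter (fun i => β i = true)).card ≤ 1) :
    ∃ α : WVar → Bool,
      (∀ i ∈ Finset.Icc 1 (m*(k-1)), α (WVar.x i) = β i) ∧
      setSat α (WmSet m k) := by
  classical
  set N := m*(k-1) with hN
  let αx : ℕ → Bool := fun i => if i ∈ Finset.Icc 1 N then β i else false
  let α : WVar → Bool := fun w =>
    match w with
    | WVar.x i => αx i
    | WVar.u j => decide (∀ i ∈ Finset.Icc 1 (j*(k-1)), αx i = false)
    | WVar.v _ => true
  have hax : ∀ i, α (WVar.x i) = αx i := fun i => rfl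
  have hav : ∀ j, α (WVar.v j) = true := fun j => rfl
  have hau : ∀ j, α (WVar.u j) = true ↔ ∀ i ∈ Finset.Icc 1 (j*(k-1)), αx i = false := by
    intro j; simp [α]
  have hkey : ∀ i, αx i = true → i ∈ Finset.Icc 1 N ∧ β i = true := by
    intro i hi
    by_cases h : i ∈ Finset.Icc 1 N
    · refine ⟨h, ?_⟩
      rw [show αx i = β i from if_pos h] at hi
      exact hi
    · rw [show αx i = false from if_neg h] at hi
      exact absurd hi (by simp)
  have huniq : ∀ i i', αx i = true → αx i' = true → i = i' := by
    intro i i' hi hi'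
    have h1 := hkey i hi
    have h2 := hkey i' hi'
    exact Finset.card_le_one.mp hβ i
      (Finset.mem_filter.2 ⟨h1.1, h1.2⟩) i' (Finset.mem_filter.2 ⟨h2.1, h2.2⟩)
  have hfalse : ∀ i0, αx i0 = true → ∀ i, i ≠ i0 → αx i = false := by
    intro i0 h0 i hne
    cases h : αx i with
    | false => rfl
    | true => exact absurd (huniq i i0 h h0) hne
  refine ⟨α, ?_, ?_⟩
  · intro i hi
    exact if_pos hi
  · intro F hF
    simp only [WmSet, Wset, Finset.mem_union, Finset.mem_image, Finset.mem_singleton,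
      Finset.mem_Icc] at hF
    rcases hF with (⟨j, ⟨hj1, hj2⟩, rfl⟩ | ⟨j, ⟨hj1, hj2⟩, rfl⟩) | rfl
    · -- formulas (i)-(ii)
      cases hu : α (WVar.u j) with
      | false =>
        refine ⟨{(WVar.u j, false)}, by simp [Wu], ?_⟩
        intro l hl
        simp only [Finset.mem_singleton] at hl
        subst hl
        simp [litEval, hu]
      | true =>
        have hall := (hau j).1 hu
        refine ⟨(if j = 1 then (∅ : Trm WVar) else {(WVar.u (j-1), true)}) ∪
          negBlockTerm WVar.x (blockX k j), by simp [Wu], ?_⟩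
        intro l hl
        rcases Finset.mem_union.1 hl with h | h
        · split_ifs at h with hj
          · simp at h
          · simp only [Finset.mem_singleton] at h
            subst h
            rw [show litEval α (WVar.u (j-1), true) = α (WVar.u (j-1)) from rfl, hau]
            intro i hi
            exact hall i (Finset.mem_Icc.2 ⟨(Finset.mem_Icc.1 hi).1,
              le_trans (Finset.mem_Icc.1 hi).2 (Nat.mul_le_mul_right _ (Nat.sub_le j 1))⟩)
        · simp only [negBlockTerm, Finset.mem_image] at h
          obtain ⟨i, hi, rfl⟩ := h
          have hi' := Finset.mem_Ioc.1 hi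
          simp only [litEval, if_neg (by simp : ¬(false = true)), hax, Bool.not_eq_true']
          exact hall i (Finset.mem_Icc.2 ⟨Nat.lt_of_le_of_lt (Nat.zero_le _) hi'.1, hi'.2⟩)
    · -- formulas (iii)-(iv)
      cases hu : α (WVar.u j) with
      | true =>
        refine ⟨{(WVar.u j, true)}, ?_, ?_⟩
        · apply Finset.mem_union_left
          apply Finset.mem_union_left
          simp
        · intro l hl
          simp only [Finset.mem_singleton] at hl
          subst hl
          simp [litEval, hu]
      | false =>
        have hex : ∃ i0 ∈ Finset.Icc 1 (j*(k-1)), αx i0 = true := by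
          by_contra hcon
          push_neg at hcon
          have : α (WVar.u j) = true := (hau j).2 (by
            intro i hi
            cases h : αx i with
            | false => rfl
            | true => exact absurd h (hcon i hi))
          rw [hu] at this; exact absurd this (by simp)
        obtain ⟨i0, hi0, hi0t⟩ := hex
        have hi0' := Finset.mem_Icc.1 hi0
        by_cases hcase : (j-1)*(k-1) < i0
        · -- i0 is in block j
          have hi0b : i0 ∈ blockX k j := Finset.mem_Ioc.2 ⟨hcase, hi0'.2⟩
          refine ⟨(if j = 1 then (∅ : Trm WVar) else {(WVar.u (j-1), true)}) ∪
            almostNegTerm WVar.x (blockX k j) i0, ?_, ?_⟩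
          · apply Finset.mem_union_right
            exact Finset.mem_image_of_mem _ hi0b
          · intro l hl
            rcases Finset.mem_union.1 hl with h | h
            · split_ifs at h with hj
              · simp at h
              · simp only [Finset.mem_singleton] at h
                subst h
                rw [show litEval α (WVar.u (j-1), true) = α (WVar.u (j-1)) from rfl, hau]
                intro i hi
                exact hfalse i0 hi0t i
                  (Nat.ne_of_lt (Nat.lt_of_le_of_lt (Finset.mem_Icc.1 hi).2 hcase))
            · simp only [almostNegTerm, Finset.mem_image, Finset.mem_erase] at h
              obtain ⟨i, ⟨hne, _⟩, rfl⟩ := h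
              simp only [litEval, if_neg (by simp : ¬(false = true)), hax, Bool.not_eq_true']
              exact hfalse i0 hi0t i hne
        · -- i0 is in an earlier block, so j ≥ 2
          push_neg at hcase
          have hjne : j ≠ 1 := by
            intro h; subst h; simp at hcase; omega
          refine ⟨insert (WVar.v (j-1), true) (negBlockTerm WVar.x (blockX k j)), ?_, ?_⟩
          · apply Finset.mem_union_left
            apply Finset.mem_union_right
            rw [if_neg hjne]
            exact Finset.mem_singleton_self _
          · intro l hl
            rcases Finset.mem_insert.1 hl with h | h
            · subst h; simp [litEval, hav]
            · simp only [negBlockTerm, Finset.mem_image] at h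
              obtain ⟨i, hi, rfl⟩ := h
              have hi' := Finset.mem_Ioc.1 hi
              simp only [litEval, if_neg (by simp : ¬(false = true)), hax, Bool.not_eq_true']
              exact hfalse i0 hi0t i (Ne.symm (Nat.ne_of_lt (Nat.lt_of_le_of_lt hcase hi'.1)))
    · -- formula (v)
      by_cases hall : ∀ i ∈ blockX k m, αx i = false
      · refine ⟨insert (WVar.v (m-1), true) (negBlockTerm WVar.x (blockX k m)),
          Finset.mem_insert_self _ _, ?_⟩
        intro l hl
        rcases Finset.mem_insert.1 hl with h | h
        · subst h; simp [litEval, hav]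
        · simp only [negBlockTerm, Finset.mem_image] at h
          obtain ⟨i, hi, rfl⟩ := h
          simp only [litEval, if_neg (by simp : ¬(false = true)), hax, Bool.not_eq_true']
          exact hall i hi
      · push_neg at hall
        obtain ⟨i0, hi0, hi0t⟩ := hall
        have hi0t : αx i0 = true := by
          cases h : αx i0 with
          | false => exact absurd h hi0t
          | true => rfl
        have hi0' := Finset.mem_Ioc.1 hi0
        refine ⟨insert (WVar.u (m-1), true) (almostNegTerm WVar.x (blockX k m) i0), ?_, ?_⟩
        · exact Finset.mem_insert_of_mem (Finset.mem_image_of_mem _ hi0)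
        · intro l hl
          rcases Finset.mem_insert.1 hl with h | h
          · subst h
            rw [show litEval α (WVar.u (m-1), true) = α (WVar.u (m-1)) from rfl, hau]
            intro i hi
            exact hfalse i0 hi0t i
              (Nat.ne_of_lt (Nat.lt_of_le_of_lt (Finset.mem_Icc.1 hi).2 hi0'.1))
          · simp only [almostNegTerm, Finset.mem_image, Finset.mem_erase] at h
            obtain ⟨i, ⟨hne, _⟩, rfl⟩ := h
            simp only [litEval, if_neg (by simp : ¬(false = true)), hax, Bool.not_eq_true']
            exact hfalse i0 hi0t i hne

end PaperKDNF
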